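/- AIS value-gap bound (finite instantiation of the paper's option-level AIS theorem): let T₁ and T₂ be random-duration Bellman optimality operators built from rewards R₁, R₂ and kernels p₁, p₂ (same γ and τmax), with unique fixed points Q₁* and Q₂*. Suppose |R₁(s,a) − R₂(s,a)| ≤ ε for all (s,a), let D := max_{(s,a)} Σ_{(s',τ)} |p₁(s,a)(s',τ) − p₂(s,a)(s',τ)|·γ^τ, let M := ‖Q₂*‖∞, and let γ̄₁ := max_{(s,a)} Σ_{(s',τ)} p₁(s,a)(s',τ)·γ^τ < 1. Then ‖Q₁* − Q₂*‖∞ ≤ (ε + M·D)/(1 − γ̄₁). -/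

import Mathlib

open Finset

/-- A random-duration transition kernel: for each `(s, a)`, the weights
`p s a s' τ` over `S × {1,…,τmax}` are nonnegative and sum to one. -/
def IsKernel {S A : Type*} [Fintype S] (τmax : ℕ) (p : S → A → S → ℕ → ℝ) : Prop :=
  ∀ s a, (∀ s' τ, 0 ≤ p s a s' τ) ∧
    ∑ s' : S, ∑ τ ∈ Finset.Icc 1 τmax, p s a s' τ = 1

/-- The effective discount `γ̄ := max_{(s,a)} Σ_{(s',τ)} p(s,a)(s',τ) γ^τ`. -/
noncomputable def effDiscount {S A : Type*} [Fintype S] [Fintype A] [Nonempty S] [Nonempty A]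
    (γ : ℝ) (τmax : ℕ) (p : S → A → S → ℕ → ℝ) : ℝ :=
  Finset.univ.sup' Finset.univ_nonempty fun sa : S × A =>
    ∑ s' : S, ∑ τ ∈ Finset.Icc 1 τmax, p sa.1 sa.2 s' τ * γ ^ τ

/-- The sup norm `‖f‖∞ = max_{(s,a)} |f(s,a)|` on functions `S × A → ℝ`. -/
noncomputable def supNorm {S A : Type*} [Fintype S] [Fintype A] [Nonempty S] [Nonempty A]
    (f : S → A → ℝ) : ℝ :=
  Finset.univ.sup' Finset.univ_nonempty fun sa : S × A => |f sa.1 sa.2|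

/-- The random-duration Bellman optimality operator:
`(T Q)(s,a) = R(s,a) + Σ_{(s',τ)} p(s,a)(s',τ) γ^τ max_{a'} Q(s',a')`. -/
noncomputable def bellman {S A : Type*} [Fintype S] [Fintype A] [Nonempty A]
    (γ : ℝ) (τmax : ℕ) (p : S → A → S → ℕ → ℝ) (R : S → A → ℝ)
    (Q : S → A → ℝ) : S → A → ℝ :=
  fun s a => R s a + ∑ s' : S, ∑ τ ∈ Finset.Icc 1 τmax,
    p s a s' τ * γ ^ τ * Finset.univ.sup' Finset.univ_nonempty (Q s')

/-- The `γ`-weighted kernel discrepancy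
`D := max_{(s,a)} Σ_{(s',τ)} |p₁(s,a)(s',τ) − p₂(s,a)(s',τ)| γ^τ`. -/
noncomputable def kernelDiscrepancy {S A : Type*} [Fintype S] [Fintype A] [Nonempty S] [Nonempty A]
    (γ : ℝ) (τmax : ℕ) (p₁ p₂ : S → A → S → ℕ → ℝ) : ℝ :=
  Finset.univ.sup' Finset.univ_nonempty fun sa : S × A =>
    ∑ s' : S, ∑ τ ∈ Finset.Icc 1 τmax,
      |p₁ sa.1 sa.2 s' τ - p₂ sa.1 sa.2 s' τ| * γ ^ τ

/-! The difference `Q₁⋆ − Q₂⋆ = T₁Q₁⋆ − T₂Q₂⋆` splits into the reward gap, the `p₁`-propagated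
gap of the greedy values `max_{a'} Q⋆(s', a')`, and the kernel gap applied to the greedy value
of `Q₂⋆`. Since taking a maximum is `1`-Lipschitz in the sup norm, this gives
`Δ ≤ ε + γ̄₁ Δ + M D` for `Δ = ‖Q₁⋆ − Q₂⋆‖∞`, and `γ̄₁ ≤ γ < 1` lets us solve for `Δ`. -/

namespace Finset

variable {ι α : Type*} [AddCommGroup α] [LinearOrder α] [IsOrderedAddMonoid α]

theorem abs_sup'_sub_sup'_le (s : Finset ι) (hs : s.Nonempty) (f g : ι → α) :
    |s.sup' hs f - s.sup' hs g| ≤ s.sup' hs fun i => |f i - g i| := by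
  rw [abs_sub_le_iff, sub_le_iff_le_add, sub_le_iff_le_add]
  constructor
  · refine sup'_le _ _ fun i hi => ?_
    calc f i ≤ |f i - g i| + g i := sub_le_iff_le_add.mp (le_abs_self _)
      _ ≤ _ := add_le_add (le_sup' (fun i => |f i - g i|) hi) (le_sup' g hi)
  · refine sup'_le _ _ fun i hi => ?_
    calc g i ≤ |f i - g i| + f i :=
        sub_le_iff_le_add.mp ((le_abs_self _).trans (abs_sub_comm _ _).le)
      _ ≤ _ := add_le_add (le_sup' (fun i => |f i - g i|) hi) (le_sup' f hi)

theorem abs_sup'_le (s : Finset ι) (hs : s.Nonempty) (f : ι → α) :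
    |s.sup' hs f| ≤ s.sup' hs fun i => |f i| := by
  simpa [sup'_const] using abs_sup'_sub_sup'_le s hs f 0

end Finset

theorem abs_sum_sum_mul_le {ι κ : Type*} (s : Finset ι) (t : Finset κ) (w : ι → κ → ℝ)
    (x : ι → ℝ) {C : ℝ} (hx : ∀ i, |x i| ≤ C) :
    |∑ i ∈ s, ∑ j ∈ t, w i j * x i| ≤ (∑ i ∈ s, ∑ j ∈ t, |w i j|) * C := by
  simp only [sum_mul]
  refine (abs_sum_le_sum_abs _ _).trans (sum_le_sum fun i _ => ?_)
  refine (abs_sum_le_sum_abs _ _).trans (sum_le_sum fun j _ => ?_)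
  rw [abs_mul]
  exact mul_le_mul_of_nonneg_left (hx i) (abs_nonneg _)

section Norms

variable {S A : Type*} [Fintype S] [Fintype A] [Nonempty S] [Nonempty A]

theorem abs_le_supNorm (f : S → A → ℝ) (s : S) (a : A) : |f s a| ≤ supNorm f :=
  le_sup' (fun sa : S × A => |f sa.1 sa.2|) (mem_univ (s, a))

theorem le_effDiscount (γ : ℝ) (τmax : ℕ) (p : S → A → S → ℕ → ℝ) (s : S) (a : A) :
    ∑ s' : S, ∑ τ ∈ Icc 1 τmax, p s a s' τ * γ ^ τ ≤ effDiscount γ τmax p :=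
  le_sup' (fun sa : S × A => ∑ s' : S, ∑ τ ∈ Icc 1 τmax, p sa.1 sa.2 s' τ * γ ^ τ)
    (mem_univ (s, a))

theorem le_kernelDiscrepancy (γ : ℝ) (τmax : ℕ) (p₁ p₂ : S → A → S → ℕ → ℝ) (s : S) (a : A) :
    ∑ s' : S, ∑ τ ∈ Icc 1 τmax, |p₁ s a s' τ - p₂ s a s' τ| * γ ^ τ
      ≤ kernelDiscrepancy γ τmax p₁ p₂ :=
  le_sup' (fun sa : S × A => ∑ s' : S, ∑ τ ∈ Icc 1 τmax,
    |p₁ sa.1 sa.2 s' τ - p₂ sa.1 sa.2 s' τ| * γ ^ τ) (mem_univ (s, a))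

theorem supNorm_le {f : S → A → ℝ} {C : ℝ} (h : ∀ s a, |f s a| ≤ C) : supNorm f ≤ C :=
  sup'_le _ _ fun sa _ => h sa.1 sa.2

theorem abs_sup'_sub_sup'_le_supNorm (Q₁ Q₂ : S → A → ℝ) (s : S) :
    |univ.sup' univ_nonempty (Q₁ s) - univ.sup' univ_nonempty (Q₂ s)|
      ≤ supNorm fun s a => Q₁ s a - Q₂ s a :=
  (abs_sup'_sub_sup'_le _ _ _ _).trans <|
    sup'_le _ _ fun a _ => abs_le_supNorm (fun s a => Q₁ s a - Q₂ s a) s a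

theorem abs_sup'_le_supNorm (Q : S → A → ℝ) (s : S) :
    |univ.sup' univ_nonempty (Q s)| ≤ supNorm Q :=
  (abs_sup'_le _ _ _).trans <| sup'_le _ _ fun a _ => abs_le_supNorm Q s a

theorem effDiscount_le {γ : ℝ} (hγ0 : 0 ≤ γ) (hγ1 : γ ≤ 1) {τmax : ℕ} {p : S → A → S → ℕ → ℝ}
    (hp : IsKernel τmax p) : effDiscount γ τmax p ≤ γ := by
  refine sup'_le _ _ fun ⟨s, a⟩ _ => ?_
  calc ∑ s' : S, ∑ τ ∈ Icc 1 τmax, p s a s' τ * γ ^ τ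
      ≤ ∑ s' : S, ∑ τ ∈ Icc 1 τmax, p s a s' τ * γ := by
        refine sum_le_sum fun s' _ => sum_le_sum fun τ hτ => ?_
        refine mul_le_mul_of_nonneg_left ?_ ((hp s a).1 s' τ)
        simpa using pow_le_pow_of_le_one hγ0 hγ1 (mem_Icc.mp hτ).1
    _ = γ := by simp only [← sum_mul, (hp s a).2, one_mul]

end Norms

section Bellman

variable {S A : Type*} [Fintype S] [Fintype A] [Nonempty A]

theorem bellman_sub_bellman (γ : ℝ) (τmax : ℕ) (p₁ p₂ : S → A → S → ℕ → ℝ)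
    (R₁ R₂ Q₁ Q₂ : S → A → ℝ) (s : S) (a : A) :
    bellman γ τmax p₁ R₁ Q₁ s a - bellman γ τmax p₂ R₂ Q₂ s a
      = (R₁ s a - R₂ s a)
        + ∑ s' : S, ∑ τ ∈ Icc 1 τmax, p₁ s a s' τ * γ ^ τ
            * (univ.sup' univ_nonempty (Q₁ s') - univ.sup' univ_nonempty (Q₂ s'))
        + ∑ s' : S, ∑ τ ∈ Icc 1 τmax, (p₁ s a s' τ - p₂ s a s' τ) * γ ^ τ
            * univ.sup' univ_nonempty (Q₂ s') := by
  simp only [bellman, mul_sub, sub_mul, sum_sub_distrib]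
  ring

variable [Nonempty S]

theorem supNorm_bellman_sub_bellman_le {γ : ℝ} (hγ : 0 ≤ γ) (τmax : ℕ)
    {p₁ : S → A → S → ℕ → ℝ} (hp₁ : ∀ s a s' τ, 0 ≤ p₁ s a s' τ) (p₂ : S → A → S → ℕ → ℝ)
    {R₁ R₂ : S → A → ℝ} {ε : ℝ} (hε : ∀ s a, |R₁ s a - R₂ s a| ≤ ε) (Q₁ Q₂ : S → A → ℝ) :
    supNorm (fun s a => bellman γ τmax p₁ R₁ Q₁ s a - bellman γ τmax p₂ R₂ Q₂ s a)
      ≤ ε + effDiscount γ τmax p₁ * supNorm (fun s a => Q₁ s a - Q₂ s a)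
          + supNorm Q₂ * kernelDiscrepancy γ τmax p₁ p₂ := by
  refine supNorm_le fun s a => ?_
  have hpropagated := abs_sum_sum_mul_le univ (Icc 1 τmax) (fun s' τ => p₁ s a s' τ * γ ^ τ) _
    (abs_sup'_sub_sup'_le_supNorm Q₁ Q₂)
  have hkernel := abs_sum_sum_mul_le univ (Icc 1 τmax)
    (fun s' τ => (p₁ s a s' τ - p₂ s a s' τ) * γ ^ τ) _ (abs_sup'_le_supNorm Q₂)
  simp only [abs_mul, abs_of_nonneg (hp₁ s a _ _), abs_of_nonneg (pow_nonneg hγ _)]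
    at hpropagated hkernel
  have hmass := le_effDiscount γ τmax p₁ s a
  have hgap := le_kernelDiscrepancy γ τmax p₁ p₂ s a
  have hΔ := (abs_nonneg _).trans (abs_le_supNorm (fun s a => Q₁ s a - Q₂ s a) s a)
  have hM := (abs_nonneg _).trans (abs_le_supNorm Q₂ s a)
  rw [bellman_sub_bellman]
  calc _ ≤ _ := abs_add_three _ _ _
    _ ≤ _ := add_le_add_three (hε s a) (hpropagated.trans (by gcongr))
      (hkernel.trans (by rw [mul_comm]; gcongr))

end Bellman

theorem ais_value_gap_general {S A : Type*} [Fintype S] [Fintype A] [Nonempty S] [Nonempty A]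
    (γ : ℝ) (hγ0 : 0 < γ) (hγ1 : γ < 1) (τmax : ℕ)
    (p₁ p₂ : S → A → S → ℕ → ℝ) (hp₁ : IsKernel τmax p₁)
    (R₁ R₂ : S → A → ℝ) (ε : ℝ) (hε : ∀ s a, |R₁ s a - R₂ s a| ≤ ε)
    (Qstar₁ : S → A → ℝ) (hfix₁ : bellman γ τmax p₁ R₁ Qstar₁ = Qstar₁)
    (Qstar₂ : S → A → ℝ) (hfix₂ : bellman γ τmax p₂ R₂ Qstar₂ = Qstar₂) :
    supNorm (fun s a => Qstar₁ s a - Qstar₂ s a)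
      ≤ (ε + supNorm Qstar₂ * kernelDiscrepancy γ τmax p₁ p₂)
          / (1 - effDiscount γ τmax p₁) := by
  have hcontraction : effDiscount γ τmax p₁ < 1 :=
    (effDiscount_le hγ0.le hγ1.le hp₁).trans_lt hγ1
  have hstep := supNorm_bellman_sub_bellman_le hγ0.le τmax (fun s a => (hp₁ s a).1) p₂ hε
    Qstar₁ Qstar₂
  rw [hfix₁, hfix₂] at hstep
  rw [le_div_iff₀ (sub_pos.2 hcontraction)]
  linarith

/-- AIS value-gap bound (finite instantiation):
`‖Q₁⋆ − Q₂⋆‖∞ ≤ (ε + M D)/(1 − γ̄₁)` where `M = ‖Q₂⋆‖∞`. -/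
theorem ais_value_gap {S A : Type*} [Fintype S] [Fintype A] [Nonempty S] [Nonempty A]
    (γ : ℝ) (hγ0 : 0 < γ) (hγ1 : γ < 1) (τmax : ℕ) (hτmax : 1 ≤ τmax)
    (p₁ p₂ : S → A → S → ℕ → ℝ) (hp₁ : IsKernel τmax p₁) (hp₂ : IsKernel τmax p₂)
    (R₁ R₂ : S → A → ℝ) (ε : ℝ) (hε : ∀ s a, |R₁ s a - R₂ s a| ≤ ε)
    (Qstar₁ : S → A → ℝ) (hfix₁ : bellman γ τmax p₁ R₁ Qstar₁ = Qstar₁)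
    (Qstar₂ : S → A → ℝ) (hfix₂ : bellman γ τmax p₂ R₂ Qstar₂ = Qstar₂) :
    supNorm (fun s a => Qstar₁ s a - Qstar₂ s a)
      ≤ (ε + supNorm Qstar₂ * kernelDiscrepancy γ τmax p₁ p₂)
          / (1 - effDiscount γ τmax p₁) :=
  ais_value_gap_general γ hγ0 hγ1 τmax p₁ p₂ hp₁ R₁ R₂ ε hε Qstar₁ hfix₁ Qstar₂ hfix₂
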